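/- arXiv:2603.00410 — 2 statements merged into one kernel-verified Lean document; each statement's English description precedes it below -/
import Mathlib

section
/- Let m be a positive integer and let (H_1, ω_1), ..., (H_m, ω_m) be i.i.d. random pairs taking values in {0,1} × {0,1}, with Pr(ω_1 = 1) > 0. Then the conditional expectation of the ratio (Σ_{i=1}^m (1 − H_i) ω_i) / (Σ_{i=1}^m ω_i), given the event {Σ_{i=1}^m ω_i > 0}, equals the conditional probability Pr(H_1 = 0 | ω_1 = 1). -/
/-! Put `R = ∑ Wᵢ` and `Tᵢ = R - Wᵢ`. Since `Wᵢ ∈ {0,1}`, a summand `φ(Hᵢ, Wᵢ) Wᵢ / R`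
equals `φ(Hᵢ, Wᵢ) Wᵢ / (1 + Tᵢ)`, and `Tᵢ` is independent of `(Hᵢ, Wᵢ)`, so its expectation
factors as `E[φ(H₁, W₁) W₁] · E[(1 + Tᵢ)⁻¹]`. Taking `φ = 1 - H` and `φ = 1`, and noting that
`∑ Wᵢ / R` is the indicator of `{R > 0}`, gives, for `V = ∑ (1 - Hᵢ) Wᵢ`,
`E[V / R] = (E[(1 - H₁) W₁] / E[W₁]) · Pr(R > 0)`; dividing by `Pr(R > 0)` leaves the
posterior `Pr(H₁ = 0 | W₁ = 1)`. -/

open MeasureTheory ProbabilityTheory Finset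

lemma nonneg_of_eq_zero_or_eq_one {x : ℝ} (h : x = 0 ∨ x = 1) : 0 ≤ x := by
  rcases h with rfl | rfl <;> norm_num

lemma abs_mul_div_sum_le {ι : Type*} [Fintype ι] {a C : ℝ} {w : ι → ℝ} (ha : |a| ≤ C)
    (hw : ∀ j, 0 ≤ w j) (i : ι) : |a * w i / ∑ j, w j| ≤ C := by
  have hsum : 0 ≤ ∑ j, w j := sum_nonneg fun j _ => hw j
  have hfrac : |w i / ∑ j, w j| ≤ 1 := by
    rw [abs_div, abs_of_nonneg (hw i), abs_of_nonneg hsum]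
    exact div_le_one_of_le₀ (single_le_sum (fun j _ => hw j) (mem_univ i)) hsum
  calc |a * w i / ∑ j, w j| = |a| * |w i / ∑ j, w j| := by rw [mul_div_assoc, abs_mul]
    _ ≤ C * 1 := mul_le_mul ha hfrac (abs_nonneg _) ((abs_nonneg a).trans ha)
    _ = C := mul_one C

lemma mul_div_add_eq_mul_inv_one_add {a w t : ℝ} (hw : w = 0 ∨ w = 1) :
    a * w / (w + t) = a * w * (1 + t)⁻¹ := by
  rcases hw with rfl | rfl <;> simp [div_eq_mul_inv]

section Measure

variable {Ω : Type*} [MeasurableSpace Ω] {μ : Measure Ω}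

lemma integral_eq_measureReal_of_eq_zero_or_eq_one {f : Ω → ℝ} (hf : Measurable f)
    (h01 : ∀ ω, f ω = 0 ∨ f ω = 1) : ∫ ω, f ω ∂μ = μ.real {ω | f ω = 1} := by
  have hind : f = {ω | f ω = 1}.indicator 1 := by
    funext ω
    rcases h01 ω with h | h <;> simp [h]
  nth_rewrite 1 [hind]
  exact integral_indicator_one (hf (measurableSet_singleton 1))

lemma integral_cond_of_forall_compl_eq_zero {s : Set Ω} {f : Ω → ℝ}
    (hf : ∀ ω ∉ s, f ω = 0) : ∫ ω, f ω ∂(μ[|s]) = (μ.real s)⁻¹ * ∫ ω, f ω ∂μ := by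
  rw [ProbabilityTheory.cond, integral_smul_measure,
    setIntegral_eq_integral_of_forall_compl_eq_zero hf, smul_eq_mul, ENNReal.toReal_inv,
    measureReal_def]

lemma toReal_cond_apply {s : Set Ω} (hs : MeasurableSet s) (t : Set Ω) :
    μ[t|s].toReal = μ.real (s ∩ t) / μ.real s := by
  rw [cond_apply hs, ENNReal.toReal_mul, ENNReal.toReal_inv, div_eq_inv_mul, measureReal_def,
    measureReal_def]

lemma integral_div_self_eq_measureReal {f : Ω → ℝ} (hf : Measurable f)
    (hf0 : ∀ ω, 0 ≤ f ω) : ∫ ω, f ω / f ω ∂μ = μ.real {ω | 0 < f ω} := by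
  rw [← integral_indicator_one (measurableSet_lt measurable_const hf)]
  congr 1
  funext ω
  rcases (hf0 ω).eq_or_lt with h | h
  · simp [← h]
  · simp [h, h.ne']

end Measure

section IndepPairs

variable {Ω ι : Type*} [MeasurableSpace Ω] {μ : Measure Ω} [Fintype ι] [DecidableEq ι]
  {H W : ι → Ω → ℝ}

lemma indepFun_pair_sum_erase (hH : ∀ i, Measurable (H i)) (hW : ∀ i, Measurable (W i))
    (hindep : iIndepFun (fun i ω => (H i ω, W i ω)) μ) (i : ι) :
    IndepFun (fun ω => (H i ω, W i ω)) (fun ω => ∑ j ∈ univ.erase i, W j ω) μ := by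
  have h := ((hindep.indepFun_finsetSum_of_notMem (fun j => (hH j).prodMk (hW j))
    (notMem_erase i univ)).symm).comp measurable_id measurable_snd
  have hsum : (fun ω => ∑ j ∈ univ.erase i, W j ω)
      = Prod.snd ∘ ∑ j ∈ univ.erase i, fun ω => (H j ω, W j ω) := by
    funext ω
    simp [Finset.sum_apply, Prod.snd_sum]
  rwa [hsum]

lemma integral_mul_div_sum_eq_mul_integral_inv (hH : ∀ i, Measurable (H i))
    (hW : ∀ i, Measurable (W i)) (hW01 : ∀ i ω, W i ω = 0 ∨ W i ω = 1)
    (hindep : iIndepFun (fun i ω => (H i ω, W i ω)) μ) {φ : ℝ × ℝ → ℝ} (hφ : Measurable φ)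
    (i : ι) :
    ∫ ω, φ (H i ω, W i ω) * W i ω / ∑ j, W j ω ∂μ
      = (∫ ω, φ (H i ω, W i ω) * W i ω ∂μ)
        * ∫ ω, (1 + ∑ j ∈ univ.erase i, W j ω)⁻¹ ∂μ := by
  have hsplit : ∀ ω, φ (H i ω, W i ω) * W i ω / ∑ j, W j ω
      = φ (H i ω, W i ω) * W i ω * (1 + ∑ j ∈ univ.erase i, W j ω)⁻¹ := fun ω => by
    rw [← add_sum_erase _ _ (mem_univ i)]
    exact mul_div_add_eq_mul_inv_one_add (hW01 i ω)
  simp_rw [hsplit]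
  exact (indepFun_pair_sum_erase hH hW hindep i).integral_fun_comp_mul_comp
    (f := fun x => φ x * x.2) (g := fun t => (1 + t)⁻¹)
    ((hH i).prodMk (hW i)).aemeasurable (measurable_sum _ fun j _ => hW j).aemeasurable
    (hφ.mul measurable_snd).aestronglyMeasurable
    (measurable_const.add measurable_id).inv.aestronglyMeasurable

lemma integral_sum_mul_div_sum_eq_mul_sum [IsFiniteMeasure μ] (hH : ∀ i, Measurable (H i))
    (hW : ∀ i, Measurable (W i)) (hW01 : ∀ i ω, W i ω = 0 ∨ W i ω = 1)
    (hindep : iIndepFun (fun i ω => (H i ω, W i ω)) μ) (i₀ : ι)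
    (hident : ∀ i,
      IdentDistrib (fun ω => (H i ω, W i ω)) (fun ω => (H i₀ ω, W i₀ ω)) μ μ)
    {φ : ℝ × ℝ → ℝ} (hφ : Measurable φ) {C : ℝ} (hφC : ∀ i ω, |φ (H i ω, W i ω)| ≤ C) :
    ∫ ω, (∑ i, φ (H i ω, W i ω) * W i ω) / ∑ j, W j ω ∂μ
      = (∫ ω, φ (H i₀ ω, W i₀ ω) * W i₀ ω ∂μ)
        * ∑ i, ∫ ω, (1 + ∑ j ∈ univ.erase i, W j ω)⁻¹ ∂μ := by
  have hint : ∀ i, Integrable (fun ω => φ (H i ω, W i ω) * W i ω / ∑ j, W j ω) μ := fun i =>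
    .of_bound (((hφ.comp ((hH i).prodMk (hW i))).mul (hW i)).div
        (measurable_sum _ fun j _ => hW j)).aestronglyMeasurable C
      (ae_of_all _ fun ω =>
        abs_mul_div_sum_le (hφC i ω) (fun j => nonneg_of_eq_zero_or_eq_one (hW01 j ω)) i)
  simp_rw [sum_div]
  rw [integral_finsetSum _ fun i _ => hint i, mul_sum]
  refine sum_congr rfl fun i _ => ?_
  rw [integral_mul_div_sum_eq_mul_integral_inv hH hW hW01 hindep hφ i]
  congr 1
  exact ((hident i).comp (u := fun x => φ x * x.2) (hφ.mul measurable_snd)).integral_eq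

lemma integral_sum_mul_div_sum_eq_mul_measureReal [IsFiniteMeasure μ]
    (hH : ∀ i, Measurable (H i)) (hW : ∀ i, Measurable (W i))
    (hW01 : ∀ i ω, W i ω = 0 ∨ W i ω = 1) (hindep : iIndepFun (fun i ω => (H i ω, W i ω)) μ)
    (i₀ : ι)
    (hident : ∀ i,
      IdentDistrib (fun ω => (H i ω, W i ω)) (fun ω => (H i₀ ω, W i₀ ω)) μ μ)
    (hW₀ : ∫ ω, W i₀ ω ∂μ ≠ 0)
    {φ : ℝ × ℝ → ℝ} (hφ : Measurable φ) {C : ℝ} (hφC : ∀ i ω, |φ (H i ω, W i ω)| ≤ C) :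
    ∫ ω, (∑ i, φ (H i ω, W i ω) * W i ω) / ∑ j, W j ω ∂μ
      = (∫ ω, φ (H i₀ ω, W i₀ ω) * W i₀ ω ∂μ) / (∫ ω, W i₀ ω ∂μ)
        * μ.real {ω | 0 < ∑ i, W i ω} := by
  have hden := integral_sum_mul_div_sum_eq_mul_sum hH hW hW01 hindep i₀ hident
    (φ := fun _ => 1) measurable_const (C := 1) (by simp)
  simp only [one_mul] at hden
  rw [integral_div_self_eq_measureReal (by fun_prop)
    (fun ω => sum_nonneg fun i _ => nonneg_of_eq_zero_or_eq_one (hW01 i ω))] at hden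
  rw [integral_sum_mul_div_sum_eq_mul_sum hH hW hW01 hindep i₀ hident hφ hφC, hden]
  field_simp

end IndepPairs

/-- For i.i.d. pairs `(Hᵢ, ωᵢ)` with values in `{0,1} × {0,1}` and
`Pr(ω₁ = 1) > 0`, the conditional expectation of `(∑ (1 - Hᵢ) ωᵢ) / (∑ ωᵢ)` given
`{∑ ωᵢ > 0}` equals `Pr(H₁ = 0 ∣ ω₁ = 1)`. -/
theorem fdr_eq_posterior
    {Ω : Type*} [MeasurableSpace Ω] (Pr : Measure Ω) [IsProbabilityMeasure Pr]
    (m : ℕ) (hm : 0 < m)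
    (H W : Fin m → Ω → ℝ)
    (hHmeas : ∀ i, Measurable (H i)) (hWmeas : ∀ i, Measurable (W i))
    (hH01 : ∀ i ω, H i ω = 0 ∨ H i ω = 1)
    (hW01 : ∀ i ω, W i ω = 0 ∨ W i ω = 1)
    (hindep : iIndepFun
      (fun i ω => (H i ω, W i ω)) Pr)
    (hident : ∀ i, IdentDistrib (fun ω => (H i ω, W i ω))
      (fun ω => (H ⟨0, hm⟩ ω, W ⟨0, hm⟩ ω)) Pr Pr)
    (hpos : 0 < Pr {ω | W ⟨0, hm⟩ ω = 1}) :
    ∫ ω, (∑ i, (1 - H i ω) * W i ω) / (∑ i, W i ω)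
        ∂(ProbabilityTheory.cond Pr {ω | 0 < ∑ i, W i ω})
      = (ProbabilityTheory.cond Pr {ω | W ⟨0, hm⟩ ω = 1} {ω | H ⟨0, hm⟩ ω = 0}).toReal := by
  set i₀ : Fin m := ⟨0, hm⟩
  have hW0 : ∀ i ω, 0 ≤ W i ω := fun i ω => nonneg_of_eq_zero_or_eq_one (hW01 i ω)
  have hB : MeasurableSet {ω | W i₀ ω = 1} := hWmeas i₀ (measurableSet_singleton 1)
  have hden : ∫ ω, W i₀ ω ∂Pr = Pr.real {ω | W i₀ ω = 1} :=
    integral_eq_measureReal_of_eq_zero_or_eq_one (hWmeas i₀) (hW01 i₀)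
  have hnum : ∫ ω, (1 - H i₀ ω) * W i₀ ω ∂Pr
      = Pr.real ({ω | W i₀ ω = 1} ∩ {ω | H i₀ ω = 0}) := by
    rw [integral_eq_measureReal_of_eq_zero_or_eq_one (by fun_prop)]
    · congr 1
      ext ω
      rcases hH01 i₀ ω with h | h <;> rcases hW01 i₀ ω with h' | h' <;> simp [h, h']
    · intro ω
      rcases hH01 i₀ ω with h | h <;> rcases hW01 i₀ ω with h' | h' <;> simp [h, h']
  have hB_pos : 0 < Pr.real {ω | W i₀ ω = 1} :=
    ENNReal.toReal_pos hpos.ne' (measure_ne_top _ _)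
  have hS_pos : Pr.real {ω | 0 < ∑ i, W i ω} ≠ 0 := by
    refine (hB_pos.trans_le (measureReal_mono fun ω hω => ?_)).ne'
    have hle := single_le_sum (f := fun i => W i ω) (fun i _ => hW0 i ω) (mem_univ i₀)
    exact one_pos.trans_le (hω.symm.trans_le hle)
  have hfdr := integral_sum_mul_div_sum_eq_mul_measureReal hHmeas hWmeas hW01 hindep i₀ hident
    (hden ▸ hB_pos.ne') (φ := fun x => 1 - x.1) (by fun_prop) (C := 1)
    (fun i ω => by rcases hH01 i ω with h | h <;> simp [h])
  have hzero : ∀ ω ∉ {ω | 0 < ∑ i, W i ω}, (∑ i, (1 - H i ω) * W i ω) / ∑ i, W i ω = 0 :=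
    fun ω hω => by rw [le_antisymm (not_lt.1 hω) (sum_nonneg fun i _ => hW0 i ω), div_zero]
  rw [integral_cond_of_forall_compl_eq_zero hzero, hfdr, toReal_cond_apply hB, hnum,
    hden]
  field_simp
end

section
/- Let 0 ≤ λ < α ≤ 1 and let (P_1, δ_1), ..., (P_m, δ_m) be i.i.d. random pairs with P_i taking values in [0,1] and δ_i taking values in {0,1}, such that Pr(P_1 ≤ α, δ_1 = 1) > 0. Define the estimator FDR̂ = (α/(α−λ)) · (Σ_{i=1}^m 1_{(λ,α]}(P_i) δ_i) / (Σ_{i=1}^m 1_{[0,α]}(P_i) δ_i). Then the conditional expectation of FDR̂ given the event {Σ_{i=1}^m 1_{[0,α]}(P_i) δ_i > 0} equals (α/(α−λ)) · Pr(λ < P_1 ≤ α | P_1 ≤ α, δ_1 = 1). -/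
/-!
Let `Xᵢ = 1_{[0,α]}(Pᵢ) δᵢ`, `Yᵢ = 1_{(λ,α]}(Pᵢ) δᵢ ≤ Xᵢ`, `S = ∑ⱼ Xⱼ` and `S₋ᵢ = ∑_{j ≠ i} Xⱼ`.
Wherever `Xᵢ = 1` we have `S = 1 + S₋ᵢ`, hence `(∑ Yᵢ) / S = ∑ Yᵢ / (1 + S₋ᵢ)` and
`1_{S > 0} = S / S = ∑ Xᵢ / (1 + S₋ᵢ)` (with `0 / 0 = 0`). As `(Xᵢ, Yᵢ)` is independent of `S₋ᵢ`,
the two expectations are `E[Y₁] · c` and `E[X₁] · c` with the same constant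
`c = ∑ᵢ E[(1 + S₋ᵢ)⁻¹]`, which cancels in the conditional expectation.
-/

open MeasureTheory ProbabilityTheory Finset

theorem sum_div_sum_eq_sum_mul_inv_one_add_sum_erase {ι K : Type*} [DecidableEq ι]
    [DivisionSemiring K] (s : Finset ι) {x y : ι → K} (hx : ∀ i ∈ s, x i = 0 ∨ x i = 1)
    (hyx : ∀ i ∈ s, y i * x i = y i) :
    (∑ i ∈ s, y i) / ∑ i ∈ s, x i = ∑ i ∈ s, y i * (1 + ∑ j ∈ s.erase i, x j)⁻¹ := by
  rw [sum_div]
  refine sum_congr rfl fun i hi => ?_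
  rcases hx i hi with h | h
  · rw [← hyx i hi, h, mul_zero, zero_div, zero_mul]
  · rw [div_eq_mul_inv, ← add_sum_erase s x hi, h]

theorem nonneg_of_eq_zero_or_eq_one_s2 {R : Type*} [Semiring R] [PartialOrder R]
    [ZeroLEOneClass R] {x : R} (hx : x = 0 ∨ x = 1) : 0 ≤ x := by
  rcases hx with rfl | rfl
  exacts [le_rfl, zero_le_one]

theorem ite_one_zero_mul_eq_zero_or_eq_one {R : Type*} [MulZeroOneClass R] (q : Prop)
    [Decidable q] {d : R} (hd : d = 0 ∨ d = 1) :
    (if q then 1 else 0) * d = 0 ∨ (if q then 1 else 0) * d = 1 := by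
  split_ifs <;> simp [hd]

theorem ite_one_zero_mul_mul_of_imp {R : Type*} [MulZeroOneClass R] {p q : Prop}
    [Decidable p] [Decidable q] (hqp : q → p) {d : R} (hd : d = 0 ∨ d = 1) :
    (if q then 1 else 0) * d * ((if p then 1 else 0) * d) = (if q then 1 else 0) * d := by
  by_cases hq : q
  · rcases hd with h | h <;> simp [hq, hqp hq, h]
  · simp [hq]

theorem measurable_ite_one_zero_mul_snd {β : Type*} [MeasurableSpace β] {p : β → Prop}
    [DecidablePred p] (hp : MeasurableSet {t | p t}) :
    Measurable fun z : β × ℝ => (if p z.1 then (1 : ℝ) else 0) * z.2 :=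
  (Measurable.ite (measurable_fst hp) measurable_const measurable_const).mul measurable_snd

section

variable {ι Ω : Type*} [Fintype ι] [MeasurableSpace Ω] {μ : Measure Ω}
  {X Y : ι → Ω → ℝ}

theorem integrable_of_eq_zero_or_eq_one [IsFiniteMeasure μ] {f : Ω → ℝ} (hf : Measurable f)
    (h01 : ∀ ω, f ω = 0 ∨ f ω = 1) : Integrable f μ :=
  .of_bound hf.aestronglyMeasurable 1 <| ae_of_all _ fun ω => by
    rcases h01 ω with h | h <;> simp [h]

theorem integral_ite_mul_eq_measureReal {p : Ω → Prop} [DecidablePred p] {d : Ω → ℝ}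
    (hd : ∀ ω, d ω = 0 ∨ d ω = 1) {s : Set Ω} (hs : MeasurableSet s)
    (hps : ∀ ω, ω ∈ s ↔ p ω ∧ d ω = 1) :
    ∫ ω, (if p ω then 1 else 0) * d ω ∂μ = μ.real s := by
  rw [← integral_indicator_one hs]
  refine integral_congr_ae (ae_of_all _ fun ω => ?_)
  by_cases hp : p ω <;> rcases hd ω with h | h <;> simp [hp, h, hps]

theorem ProbabilityTheory.iIndepFun.indepFun_sum_erase_fst [DecidableEq ι] {f : ι → Ω → ℝ × ℝ}
    (h : iIndepFun f μ) (hf : ∀ i, AEMeasurable (f i) μ) {u : ℝ × ℝ → ℝ} (hu : Measurable u)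
    (i : ι) : IndepFun (fun ω => u (f i ω)) (fun ω => ∑ j ∈ univ.erase i, (f j ω).1) μ := by
  have h_sum := (h.indepFun_finsetSum_of_notMem₀ hf (notMem_erase i univ)).symm
  have h_fst : (fun ω => ∑ j ∈ univ.erase i, (f j ω).1) = Prod.fst ∘ ∑ j ∈ univ.erase i, f j := by
    ext ω
    simp only [Function.comp_apply, Finset.sum_apply, Prod.fst_sum]
  exact h_fst ▸ h_sum.comp hu measurable_fst

theorem integral_sum_div_sum_eq_mul_sum_integral_inv [DecidableEq ι]
    (hX : ∀ i ω, X i ω = 0 ∨ X i ω = 1) (hXm : ∀ i, Measurable (X i))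
    (hYX : ∀ i ω, Y i ω * X i ω = Y i ω) (hY : ∀ i, Integrable (Y i) μ)
    (hind : ∀ i, IndepFun (Y i) (fun ω => ∑ j ∈ univ.erase i, X j ω) μ)
    {c : ℝ} (hc : ∀ i, ∫ ω, Y i ω ∂μ = c) :
    ∫ ω, (∑ i, Y i ω) / ∑ i, X i ω ∂μ
      = c * ∑ i, ∫ ω, (1 + ∑ j ∈ univ.erase i, X j ω)⁻¹ ∂μ := by
  set g : ℝ → ℝ := fun t => (1 + t)⁻¹
  have hgm : Measurable g := (measurable_const.add measurable_id).inv
  have hg_bound : ∀ i ω, ‖g (∑ j ∈ univ.erase i, X j ω)‖ ≤ 1 := fun i ω => by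
    have : 0 ≤ ∑ j ∈ univ.erase i, X j ω :=
      sum_nonneg fun j _ => nonneg_of_eq_zero_or_eq_one_s2 (hX j ω)
    rw [Real.norm_of_nonneg (by positivity)]
    exact inv_le_one_of_one_le₀ (by linarith)
  have hTm : ∀ i, Measurable fun ω => ∑ j ∈ univ.erase i, X j ω :=
    fun i => Finset.measurable_sum _ fun j _ => hXm j
  calc ∫ ω, (∑ i, Y i ω) / ∑ i, X i ω ∂μ
      = ∫ ω, ∑ i, Y i ω * g (∑ j ∈ univ.erase i, X j ω) ∂μ :=
        integral_congr_ae <| ae_of_all _ fun ω =>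
          sum_div_sum_eq_sum_mul_inv_one_add_sum_erase _ (fun i _ => hX i ω)
            (fun i _ => hYX i ω)
    _ = ∑ i, ∫ ω, Y i ω * g (∑ j ∈ univ.erase i, X j ω) ∂μ :=
        integral_finsetSum _ fun i _ =>
          (hY i).mul_bdd (hgm.comp (hTm i)).aestronglyMeasurable (ae_of_all _ (hg_bound i))
    _ = ∑ i, c * ∫ ω, g (∑ j ∈ univ.erase i, X j ω) ∂μ := by
        refine sum_congr rfl fun i _ => ?_
        rw [← hc i]
        exact ((hind i).comp measurable_id hgm).integral_fun_mul_eq_mul_integral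
          (hY i).aestronglyMeasurable (hgm.comp (hTm i)).aestronglyMeasurable
    _ = _ := (mul_sum _ _ _).symm

theorem measureReal_sum_pos_eq_mul_sum_integral_inv [DecidableEq ι] [IsFiniteMeasure μ]
    (hX : ∀ i ω, X i ω = 0 ∨ X i ω = 1) (hXm : ∀ i, Measurable (X i))
    (hind : ∀ i, IndepFun (X i) (fun ω => ∑ j ∈ univ.erase i, X j ω) μ)
    {c : ℝ} (hc : ∀ i, ∫ ω, X i ω ∂μ = c) :
    μ.real {ω | 0 < ∑ i, X i ω} = c * ∑ i, ∫ ω, (1 + ∑ j ∈ univ.erase i, X j ω)⁻¹ ∂μ := by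
  rw [← integral_sum_div_sum_eq_mul_sum_integral_inv hX hXm
      (fun i ω => by rcases hX i ω with h | h <;> simp [h])
      (fun i => integrable_of_eq_zero_or_eq_one (hXm i) (hX i)) hind hc,
    ← integral_indicator_one (measurableSet_lt measurable_const
      (Finset.measurable_sum _ fun i _ => hXm i))]
  refine integral_congr_ae (ae_of_all _ fun ω => ?_)
  have hS0 : 0 ≤ ∑ i, X i ω := sum_nonneg fun i _ => nonneg_of_eq_zero_or_eq_one_s2 (hX i ω)
  rcases hS0.lt_or_eq with h | h
  · simp [Set.indicator_of_mem (show ω ∈ {ω | 0 < ∑ i, X i ω} from h), div_self h.ne']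
  · simp [← h]

theorem integral_le_measureReal_sum_pos [IsFiniteMeasure μ] (hX : ∀ i ω, X i ω = 0 ∨ X i ω = 1)
    (hXm : ∀ i, Measurable (X i)) (i : ι) :
    ∫ ω, X i ω ∂μ ≤ μ.real {ω | 0 < ∑ j, X j ω} := by
  have hAm : MeasurableSet {ω | 0 < ∑ j, X j ω} :=
    measurableSet_lt measurable_const (Finset.measurable_sum _ fun j _ => hXm j)
  rw [← integral_indicator_one hAm]
  refine integral_mono (integrable_of_eq_zero_or_eq_one (hXm i) (hX i))
    ((integrable_const 1).indicator hAm) fun ω => ?_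
  rcases hX i ω with h | h
  · rw [h]
    exact Set.indicator_nonneg (fun _ _ => zero_le_one) ω
  · have hω : 0 < ∑ j, X j ω := by
      linarith [single_le_sum (f := fun j => X j ω)
        (fun j _ => nonneg_of_eq_zero_or_eq_one_s2 (hX j ω)) (mem_univ i)]
    simp [h, hω]

theorem integral_cond_sum_div_sum [IsProbabilityMeasure μ] [Nonempty ι]
    (hX : ∀ i ω, X i ω = 0 ∨ X i ω = 1) (hY : ∀ i ω, Y i ω = 0 ∨ Y i ω = 1)
    (hXm : ∀ i, Measurable (X i)) (hYm : ∀ i, Measurable (Y i))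
    (hYX : ∀ i ω, Y i ω * X i ω = Y i ω) (hind : iIndepFun (fun i ω => (X i ω, Y i ω)) μ)
    {pX pY : ℝ} (hpX : ∀ i, ∫ ω, X i ω ∂μ = pX) (hpX0 : pX ≠ 0)
    (hpY : ∀ i, ∫ ω, Y i ω ∂μ = pY) :
    ∫ ω, (∑ i, Y i ω) / ∑ i, X i ω ∂(cond μ {ω | 0 < ∑ i, X i ω}) = pY / pX := by
  classical
  set A := {ω | 0 < ∑ i, X i ω}
  have hX0 : ∀ i ω, 0 ≤ X i ω := fun i ω => nonneg_of_eq_zero_or_eq_one_s2 (hX i ω)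
  set E := ∑ i, ∫ ω, (1 + ∑ j ∈ univ.erase i, X j ω)⁻¹ ∂μ
  have hW : ∀ i, AEMeasurable (fun ω => (X i ω, Y i ω)) μ :=
    fun i => ((hXm i).prodMk (hYm i)).aemeasurable
  have hnum : ∫ ω, (∑ i, Y i ω) / ∑ i, X i ω ∂μ = pY * E :=
    integral_sum_div_sum_eq_mul_sum_integral_inv hX hXm hYX
      (fun i => integrable_of_eq_zero_or_eq_one (hYm i) (hY i))
      (hind.indepFun_sum_erase_fst hW measurable_snd) hpY
  have hden : μ.real A = pX * E := measureReal_sum_pos_eq_mul_sum_integral_inv hX hXm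
    (hind.indepFun_sum_erase_fst hW measurable_fst) hpX
  obtain ⟨i₀⟩ := ‹Nonempty ι›
  have hpX_pos : 0 < pX := (hpX i₀ ▸ integral_nonneg (hX0 i₀)).lt_of_ne hpX0.symm
  have hA : μ.real A ≠ 0 :=
    (hpX_pos.trans_le (hpX i₀ ▸ integral_le_measureReal_sum_pos hX hXm i₀)).ne'
  have hE : E ≠ 0 := right_ne_zero_of_mul (hden ▸ hA)
  -- off `A` the denominator vanishes, so the integrand is `_ / 0 = 0` there
  rw [ProbabilityTheory.cond, integral_smul_measure,
    setIntegral_eq_integral_of_forall_compl_eq_zero fun ω (hω : ω ∉ A) => by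
      rw [le_antisymm (not_lt.1 hω) (sum_nonneg fun i _ => hX0 i ω), div_zero],
    hnum, smul_eq_mul, ENNReal.toReal_inv, ← measureReal_def, hden]
  field_simp

theorem integral_cond_sum_div_sum_of_identDistrib [IsProbabilityMeasure μ] {β : Type*}
    [MeasurableSpace β] {V : ι → Ω → β} (hVm : ∀ i, Measurable (V i)) (hind : iIndepFun V μ)
    (i₀ : ι) (hident : ∀ i, IdentDistrib (V i) (V i₀) μ μ) {f g : β → ℝ} (hf : Measurable f)
    (hg : Measurable g) (hf01 : ∀ i ω, f (V i ω) = 0 ∨ f (V i ω) = 1)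
    (hg01 : ∀ i ω, g (V i ω) = 0 ∨ g (V i ω) = 1) (hgf : ∀ i ω, g (V i ω) * f (V i ω) = g (V i ω))
    (hpos : ∫ ω, f (V i₀ ω) ∂μ ≠ 0) :
    ∫ ω, (∑ i, g (V i ω)) / ∑ i, f (V i ω) ∂(cond μ {ω | 0 < ∑ i, f (V i ω)})
      = (∫ ω, g (V i₀ ω) ∂μ) / ∫ ω, f (V i₀ ω) ∂μ :=
  have : Nonempty ι := ⟨i₀⟩
  integral_cond_sum_div_sum hf01 hg01 (fun i => hf.comp (hVm i)) (fun i => hg.comp (hVm i)) hgf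
    (hind.comp (fun _ z => (f z, g z)) fun _ => hf.prodMk hg)
    (fun i => ((hident i).comp hf).integral_eq) hpos (fun i => ((hident i).comp hg).integral_eq)

end

theorem expectation_fdr_estimator_general
    {Ω : Type*} [MeasurableSpace Ω] (Pr : Measure Ω) [IsProbabilityMeasure Pr]
    (lam α : ℝ)
    (m : ℕ) (hm : 0 < m)
    (P D : Fin m → Ω → ℝ)
    (hPmeas : ∀ i, Measurable (P i)) (hDmeas : ∀ i, Measurable (D i))
    (hP01 : ∀ i ω, P i ω ∈ Set.Icc (0 : ℝ) 1)
    (hD01 : ∀ i ω, D i ω = 0 ∨ D i ω = 1)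
    (hindep : iIndepFun
      (fun i ω => (P i ω, D i ω)) Pr)
    (hident : ∀ i, IdentDistrib (fun ω => (P i ω, D i ω))
      (fun ω => (P ⟨0, hm⟩ ω, D ⟨0, hm⟩ ω)) Pr Pr)
    (hpos : 0 < Pr {ω | P ⟨0, hm⟩ ω ≤ α ∧ D ⟨0, hm⟩ ω = 1}) :
    ∫ ω, (α / (α - lam)) *
        ((∑ i, (if lam < P i ω ∧ P i ω ≤ α then (1 : ℝ) else 0) * D i ω) /
          (∑ i, (if 0 ≤ P i ω ∧ P i ω ≤ α then (1 : ℝ) else 0) * D i ω))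
        ∂(ProbabilityTheory.cond Pr
          {ω | 0 < ∑ i, (if 0 ≤ P i ω ∧ P i ω ≤ α then (1 : ℝ) else 0) * D i ω})
      = (α / (α - lam)) *
        (ProbabilityTheory.cond Pr {ω | P ⟨0, hm⟩ ω ≤ α ∧ D ⟨0, hm⟩ ω = 1}
          {ω | lam < P ⟨0, hm⟩ ω ∧ P ⟨0, hm⟩ ω ≤ α}).toReal := by
  set i₀ : Fin m := ⟨0, hm⟩
  set sel : ℝ × ℝ → ℝ := fun z => (if 0 ≤ z.1 ∧ z.1 ≤ α then (1 : ℝ) else 0) * z.2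
  set tail : ℝ × ℝ → ℝ := fun z => (if lam < z.1 ∧ z.1 ≤ α then (1 : ℝ) else 0) * z.2
  have hsel : Measurable sel := measurable_ite_one_zero_mul_snd measurableSet_Icc
  have htail : Measurable tail := measurable_ite_one_zero_mul_snd measurableSet_Ioc
  set B := {ω | P i₀ ω ≤ α ∧ D i₀ ω = 1}
  set C := {ω | lam < P i₀ ω ∧ P i₀ ω ≤ α}
  have hBm : MeasurableSet B := measurableSet_le (hPmeas i₀) measurable_const |>.inter
    (hDmeas i₀ (measurableSet_singleton 1))
  have hCm : MeasurableSet C := measurableSet_lt measurable_const (hPmeas i₀) |>.inter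
    (measurableSet_le (hPmeas i₀) measurable_const)
  have hX₀ : ∫ ω, sel (P i₀ ω, D i₀ ω) ∂Pr = Pr.real B :=
    integral_ite_mul_eq_measureReal (hD01 i₀) hBm fun ω => by simp [B, (hP01 i₀ ω).1]
  have hY₀ : ∫ ω, tail (P i₀ ω, D i₀ ω) ∂Pr = Pr.real (B ∩ C) :=
    integral_ite_mul_eq_measureReal (hD01 i₀) (hBm.inter hCm) fun ω => by
      simp only [B, C, Set.mem_inter_iff, Set.mem_ofPred_eq]; tauto
  have key := integral_cond_sum_div_sum_of_identDistrib
    (fun i => (hPmeas i).prodMk (hDmeas i)) hindep i₀ hident hsel htail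
    (fun i ω => ite_one_zero_mul_eq_zero_or_eq_one _ (hD01 i ω))
    (fun i ω => ite_one_zero_mul_eq_zero_or_eq_one _ (hD01 i ω))
    (fun i ω => ite_one_zero_mul_mul_of_imp (fun h => ⟨(hP01 i ω).1, h.2⟩) (hD01 i ω))
    (hX₀ ▸ (ENNReal.toReal_pos hpos.ne' (measure_ne_top _ _)).ne')
  rw [hX₀, hY₀] at key
  rw [integral_const_mul, cond_apply hBm, ENNReal.toReal_mul, ENNReal.toReal_inv,
    ← measureReal_def, ← measureReal_def, inv_mul_eq_div]
  exact congrArg _ key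

/-- For i.i.d. pairs `(Pᵢ, δᵢ)` with `Pᵢ ∈ [0,1]`, `δᵢ ∈ {0,1}` and
`Pr(P₁ ≤ α, δ₁ = 1) > 0`, the conditional expectation of
`FDR̂ = (α/(α−λ)) ∑ 1_{(λ,α]}(Pᵢ)δᵢ / ∑ 1_{[0,α]}(Pᵢ)δᵢ` given
`{∑ 1_{[0,α]}(Pᵢ)δᵢ > 0}` equals `(α/(α−λ)) Pr(λ < P₁ ≤ α ∣ P₁ ≤ α, δ₁ = 1)`. -/
theorem expectation_fdr_estimator
    {Ω : Type*} [MeasurableSpace Ω] (Pr : Measure Ω) [IsProbabilityMeasure Pr]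
    (lam α : ℝ) (hlam : 0 ≤ lam) (hla : lam < α) (hα : α ≤ 1)
    (m : ℕ) (hm : 0 < m)
    (P D : Fin m → Ω → ℝ)
    (hPmeas : ∀ i, Measurable (P i)) (hDmeas : ∀ i, Measurable (D i))
    (hP01 : ∀ i ω, P i ω ∈ Set.Icc (0 : ℝ) 1)
    (hD01 : ∀ i ω, D i ω = 0 ∨ D i ω = 1)
    (hindep : iIndepFun
      (fun i ω => (P i ω, D i ω)) Pr)
    (hident : ∀ i, IdentDistrib (fun ω => (P i ω, D i ω))
      (fun ω => (P ⟨0, hm⟩ ω, D ⟨0, hm⟩ ω)) Pr Pr)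
    (hpos : 0 < Pr {ω | P ⟨0, hm⟩ ω ≤ α ∧ D ⟨0, hm⟩ ω = 1}) :
    ∫ ω, (α / (α - lam)) *
        ((∑ i, (if lam < P i ω ∧ P i ω ≤ α then (1 : ℝ) else 0) * D i ω) /
          (∑ i, (if 0 ≤ P i ω ∧ P i ω ≤ α then (1 : ℝ) else 0) * D i ω))
        ∂(ProbabilityTheory.cond Pr
          {ω | 0 < ∑ i, (if 0 ≤ P i ω ∧ P i ω ≤ α then (1 : ℝ) else 0) * D i ω})
      = (α / (α - lam)) *
        (ProbabilityTheory.cond Pr {ω | P ⟨0, hm⟩ ω ≤ α ∧ D ⟨0, hm⟩ ω = 1}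
          {ω | lam < P ⟨0, hm⟩ ω ∧ P ⟨0, hm⟩ ω ≤ α}).toReal :=
  expectation_fdr_estimator_general Pr lam α m hm P D hPmeas hDmeas hP01 hD01 hindep hident hpos
end
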